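/- For every positive long root φ ≠ θ in an irreducible root system, there exists a simple reflection s_i such that s_i φ is a root with L(s_i φ) = L(φ) − 1. -/

import Mathlib

/-!
Since `φ` and `θ` have the same length and `φ ≠ θ`, `(φ|θ) < (φ|φ)`, i.e. `(φ|θ - φ) < 0`; as
`θ - φ` is a nonnegative combination of simple roots, `(φ|α_i) < 0` for some `i`. Integrality
and Cauchy–Schwarz force `⟨α_i, φ∨⟩ = -1`, i.e. `2(φ|α_i) = -(θ|θ)`. Finally `⟨ρ, α_i∨⟩ = 1`,
because `s_i` permutes `Φ₊ \ {α_i}` and sends `α_i` to `-α_i`, so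
`L(s_i φ) = L(φ) + 2(φ|α_i)/(θ|θ) = L(φ) - 1`.
-/

open scoped RealInnerProductSpace BigOperators

noncomputable section

variable (V : Type) [NormedAddCommGroup V] [InnerProductSpace ℝ V] [FiniteDimensional ℝ V]

/-- A finite, reduced, crystallographic root system in a Euclidean space `V`,
with a chosen set of positive roots and the corresponding simple roots. -/
structure RootSystemData where
  /-- the rank -/
  l : ℕ
  /-- the simple roots -/
  simple : Fin l → V
  /-- the set of roots -/
  roots : Finset V
  /-- the set of positive roots -/
  pos : Finset V
  pos_subset : pos ⊆ roots
  simple_mem_pos : ∀ i, simple i ∈ pos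
  simple_indep : LinearIndependent ℝ simple
  span_roots : Submodule.span ℝ (roots : Set V) = ⊤
  root_ne_zero : ∀ α ∈ roots, α ≠ 0
  neg_mem : ∀ α ∈ roots, -α ∈ roots
  pos_iff : ∀ α ∈ roots, (α ∈ pos ↔ -α ∉ pos)
  pos_combo : ∀ α ∈ pos, ∃ c : Fin l → ℕ, α = ∑ i, (c i : ℝ) • simple i
  crystal : ∀ α ∈ roots, ∀ β ∈ roots, ∃ n : ℤ, 2 * ⟪β, α⟫ / ⟪α, α⟫ = (n : ℝ)
  reflect_mem : ∀ α ∈ roots, ∀ β ∈ roots, β - (2 * ⟪β, α⟫ / ⟪α, α⟫) • α ∈ roots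
  sub_mem : ∀ α ∈ roots, ∀ β ∈ roots, 0 < ⟪α, β⟫ → α ≠ β → α - β ∈ roots
  reduced : ∀ α ∈ roots, ∀ c : ℝ, c • α ∈ roots → c = 1 ∨ c = -1

namespace RootSystemData

open Classical

variable {V}

/-- The pairing `⟨λ, α∨⟩ = 2(λ|α)/(α|α)` of a vector with the coroot of `α`. -/
def pair (lam α : V) : ℝ := 2 * ⟪lam, α⟫ / ⟪α, α⟫

/-- The orthogonal reflection in the hyperplane orthogonal to `α`. -/
def sRefl (α : V) : V ≃ₗᵢ[ℝ] V := Submodule.reflection ((ℝ ∙ α)ᗮ)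

variable (R : RootSystemData V)

/-- Half the sum of the positive roots. -/
def ρ : V := (2 : ℝ)⁻¹ • ∑ φ ∈ R.pos, φ

/-- The (finite) Weyl group, generated by the simple reflections. -/
def W : Subgroup (V ≃ₗᵢ[ℝ] V) :=
  Subgroup.closure (Set.range fun i => sRefl (R.simple i))

/-- The length of a Weyl group element: the minimal length of a word in the
simple reflections expressing it. -/
def len (w : V ≃ₗᵢ[ℝ] V) : ℕ :=
  sInf {k : ℕ | ∃ f : Fin k → Fin R.l,
    w = (List.ofFn fun j => sRefl (R.simple (f j))).prod}

/-- The inversion set `Φ_w = Φ₊ ∩ wΦ₋`. -/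
def inversions (w : V ≃ₗᵢ[ℝ] V) : Finset V :=
  R.pos.filter fun x => -(w.symm x) ∈ R.pos

end RootSystemData

/-- An irreducible root system, together with its highest root `θ`. -/
structure IrredRootSystemData extends RootSystemData V where
  /-- the highest root -/
  θ : V
  θ_mem_pos : θ ∈ pos
  θ_highest : ∀ φ ∈ pos, ∃ c : Fin l → ℕ, θ - φ = ∑ i, (c i : ℝ) • simple i
  θ_long : ∀ φ ∈ roots, ‖φ‖ ≤ ‖θ‖
  θ_dominant : ∀ i, 0 ≤ ⟪θ, simple i⟫
  irreducible : ∀ s : Finset V, s ⊆ roots →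
      (∀ α ∈ s, ∀ β ∈ roots, β ∉ s → ⟪α, β⟫ = 0) → s = ∅ ∨ s = roots

namespace IrredRootSystemData

variable {V} (R : IrredRootSystemData V)

/-- The affine functional `L(φ) = 2(θ−φ|ρ)/(θ|θ)`. -/
def L (φ : V) : ℝ := 2 * ⟪R.θ - φ, R.toRootSystemData.ρ⟫ / ⟪R.θ, R.θ⟫

/-- A root is long if it has the same length as the highest root. -/
def IsLong (φ : V) : Prop := ‖φ‖ = ‖R.θ‖

/-- The dual Coxeter number `g = ⟨ρ, θ∨⟩ + 1`. -/
def dualCox : ℝ := RootSystemData.pair R.toRootSystemData.ρ R.θ + 1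

/-- The affine reflection `s₀(λ) = λ − (⟨λ,θ∨⟩ − g)θ` (scaled so that `s₀ρ = ρ + θ`). -/
def s0 (lam : V) : V := lam - (RootSystemData.pair lam R.θ - R.dualCox) • R.θ

end IrredRootSystemData

section InnerProduct

variable {E : Type*} [NormedAddCommGroup E] [InnerProductSpace ℝ E]

theorem real_inner_lt_inner_self_of_norm_eq {x y : E} (h : ‖x‖ = ‖y‖) (hne : x ≠ y) :
    ⟪x, y⟫ < ⟪y, y⟫ := by
  have hpos : 0 < ‖x - y‖ ^ 2 := by
    have := sub_ne_zero.2 hne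
    positivity
  rw [norm_sub_sq_real, h, ← real_inner_self_eq_norm_sq] at hpos
  linarith

theorem neg_inner_self_lt_real_inner_of_norm_le {x y : E} (h : ‖x‖ ≤ ‖y‖) (hne : x ≠ -y) :
    -⟪y, y⟫ < ⟪x, y⟫ := by
  have hpos : 0 < ‖x + y‖ ^ 2 := by
    have : x + y ≠ 0 := fun h0 => hne (eq_neg_of_add_eq_zero_left h0)
    positivity
  have hsq : ‖x‖ ^ 2 ≤ ‖y‖ ^ 2 := pow_le_pow_left₀ (norm_nonneg x) h 2
  rw [norm_add_sq_real] at hpos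
  rw [real_inner_self_eq_norm_sq]
  linarith

end InnerProduct

namespace RootSystemData

variable {E : Type} [NormedAddCommGroup E] [InnerProductSpace ℝ E]

theorem pair_smul_left (c : ℝ) (v α : E) : pair (c • v) α = c * pair v α := by
  simp only [pair, real_inner_smul_left]
  ring

theorem pair_mul_inner_self (v : E) {α : E} (hα : α ≠ 0) : pair v α * ⟪α, α⟫ = 2 * ⟪v, α⟫ :=
  div_mul_cancel₀ _ (inner_self_ne_zero.2 hα)

theorem sRefl_apply (α v : E) : sRefl α v = v - pair v α • α := by
  rcases eq_or_ne α 0 with rfl | hα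
  · simp [sRefl, pair, Submodule.reflection_mem_subspace_eq_self]
  rw [sRefl, Submodule.reflection_orthogonal_apply, Submodule.reflection_singleton_apply,
    pair, real_inner_self_eq_norm_sq, real_inner_comm]
  simp only [RCLike.ofReal_real_eq_id, id]
  module

theorem sRefl_self (α : E) : sRefl α α = -α :=
  Submodule.reflection_orthogonalComplement_singleton_eq_neg α

theorem sRefl_sRefl (α v : E) : sRefl α (sRefl α v) = v :=
  Submodule.reflection_reflection _ v

variable (R : RootSystemData E)

theorem neg_mem_pos_of_notMem {α : E} (hα : α ∈ R.roots) (h : α ∉ R.pos) : -α ∈ R.pos := by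
  rwa [R.pos_iff (-α) (R.neg_mem α hα), neg_neg]

/-- The coordinates of `β` and of `-(β - t • α_i)` are nonnegative and sum to zero off `i`. -/
theorem exists_eq_natCast_smul_simple {β : E} (hβ : β ∈ R.pos) (i : Fin R.l) {t : ℝ}
    (hneg : -(β - t • R.simple i) ∈ R.pos) : ∃ m : ℕ, β = (m : ℝ) • R.simple i := by
  classical
  obtain ⟨c, hc⟩ := R.pos_combo β hβ
  obtain ⟨d, hd⟩ := R.pos_combo _ hneg
  have hsum : ∑ j, ((c j : ℝ) + d j) • R.simple j
      = ∑ j, (if j = i then t else 0) • R.simple j := by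
    simp only [add_smul, Finset.sum_add_distrib, ← hc, ← hd, ite_smul, zero_smul,
      Finset.sum_ite_eq', Finset.mem_univ, if_true]
    abel
  have hc_zero : ∀ j ≠ i, (c j : ℝ) = 0 := fun j hj => by
    have := Fintype.linearIndependent_iffₛ.1 R.simple_indep _ _ hsum j
    rw [if_neg hj] at this
    linarith [(c j).cast_nonneg (α := ℝ), (d j).cast_nonneg (α := ℝ)]
  refine ⟨c i, ?_⟩
  rw [hc, Finset.sum_eq_single i (fun j _ hj => by rw [hc_zero j hj, zero_smul])
    (fun h => absurd (Finset.mem_univ i) h)]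

theorem sRefl_simple_mem_pos (i : Fin R.l) {β : E} (hβ : β ∈ R.pos) (hne : β ≠ R.simple i) :
    sRefl (R.simple i) β ∈ R.pos := by
  have hαr := R.pos_subset (R.simple_mem_pos i)
  have hβr := R.pos_subset hβ
  rw [sRefl_apply]
  by_contra h
  obtain ⟨m, rfl⟩ := R.exists_eq_natCast_smul_simple hβ i
    (R.neg_mem_pos_of_notMem (R.reflect_mem _ hαr _ hβr) h)
  rcases R.reduced _ hαr m hβr with hm | hm
  · exact hne (by rw [hm, one_smul])
  · linarith [m.cast_nonneg (α := ℝ)]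

theorem sRefl_ne_of_mem_pos {α β : E} (hα : α ∈ R.pos) (hβ : β ∈ R.pos) : sRefl α β ≠ α := by
  intro h
  have hβ_eq : β = -α := by rw [← sRefl_sRefl α β, h, sRefl_self]
  exact (R.pos_iff α (R.pos_subset hα)).1 hα (hβ_eq ▸ hβ)

theorem pair_sum_pos_simple (i : Fin R.l) : pair (∑ β ∈ R.pos, β) (R.simple i) = 2 := by
  classical
  set α := R.simple i
  have hα : α ∈ R.pos := R.simple_mem_pos i
  have hα0 : α ≠ 0 := R.root_ne_zero α (R.pos_subset hα)
  have hmaps : ∀ β ∈ R.pos.erase α, sRefl α β ∈ R.pos.erase α := fun β hβ => by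
    rw [Finset.mem_erase] at hβ ⊢
    exact ⟨R.sRefl_ne_of_mem_pos hα hβ.2, R.sRefl_simple_mem_pos i hβ.2 hβ.1⟩
  have herase : ∑ β ∈ R.pos.erase α, sRefl α β = ∑ β ∈ R.pos.erase α, β :=
    Finset.sum_nbij' (sRefl α) (sRefl α) hmaps hmaps (fun β _ => sRefl_sRefl α β)
      (fun β _ => sRefl_sRefl α β) (fun _ _ => rfl)
  have key : pair (∑ β ∈ R.pos, β) α • α = (2 : ℝ) • α := by
    have h := map_sum (sRefl α) id R.pos
    rw [sRefl_apply, ← Finset.add_sum_erase _ _ hα, ← Finset.add_sum_erase _ _ hα] at h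
    simp only [id, herase, sRefl_self] at h
    rw [← Finset.add_sum_erase _ _ hα]
    linear_combination (norm := module) -h
  exact smul_left_injective ℝ hα0 key

theorem pair_rho_simple (i : Fin R.l) : pair R.ρ (R.simple i) = 1 := by
  rw [ρ, pair_smul_left, pair_sum_pos_simple]
  norm_num

theorem pair_eq_neg_one_of_inner_neg {α β : E} (hα : α ∈ R.roots) (hβ : β ∈ R.roots)
    (hnorm : ‖α‖ ≤ ‖β‖) (hne : α ≠ -β) (hneg : ⟪α, β⟫ < 0) : pair α β = -1 := by
  have hββ : 0 < ⟪β, β⟫ := real_inner_self_pos.2 (R.root_ne_zero β hβ)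
  obtain ⟨k, hk⟩ := R.crystal β hβ α hα
  have hk_neg : (k : ℝ) < 0 := hk ▸ div_neg_of_neg_of_pos (by linarith) hββ
  have hk_gt : (-2 : ℝ) < k := by
    rw [← hk, lt_div_iff₀ hββ]
    linarith [neg_inner_self_lt_real_inner_of_norm_le hnorm hne]
  have hk_eq : k = -1 := by
    have : k < 0 := by exact_mod_cast hk_neg
    have : -2 < k := by exact_mod_cast hk_gt
    omega
  rw [pair, hk, hk_eq]
  norm_num

end RootSystemData

namespace IrredRootSystemData

variable {E : Type} [NormedAddCommGroup E] [InnerProductSpace ℝ E] (R : IrredRootSystemData E)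

open RootSystemData in
theorem L_sub_pair_smul_simple (φ : E) (i : Fin R.l) :
    R.L (φ - pair φ (R.simple i) • R.simple i) = R.L φ + 2 * ⟪φ, R.simple i⟫ / ⟪R.θ, R.θ⟫ := by
  have hα0 : R.simple i ≠ 0 := R.root_ne_zero _ (R.pos_subset (R.simple_mem_pos i))
  have hρ : 2 * ⟪R.simple i, R.toRootSystemData.ρ⟫ = ⟪R.simple i, R.simple i⟫ := by
    rw [real_inner_comm, ← pair_mul_inner_self _ hα0, pair_rho_simple, one_mul]
  rw [L, L, sub_sub_eq_add_sub, add_sub_right_comm, inner_add_left, real_inner_smul_left,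
    ← pair_mul_inner_self φ hα0, ← hρ]
  ring

theorem exists_inner_simple_neg {φ : E} (hφ : φ ∈ R.pos) (hlt : ⟪φ, R.θ⟫ < ⟪φ, φ⟫) :
    ∃ i, ⟪φ, R.simple i⟫ < 0 := by
  obtain ⟨c, hc⟩ := R.θ_highest φ hφ
  by_contra! h
  have hnonneg : 0 ≤ ⟪φ, R.θ - φ⟫ := by
    rw [hc, inner_sum]
    exact Finset.sum_nonneg fun j _ => by
      rw [real_inner_smul_right]
      exact mul_nonneg (Nat.cast_nonneg _) (h j)
  rw [inner_sub_right] at hnonneg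
  linarith

end IrredRootSystemData

/-- For every positive long root `φ ≠ θ` there is a simple reflection `s_i`
with `L(s_i φ) = L(φ) − 1`. -/
theorem exists_simple_reflection_decreasing_L (R : IrredRootSystemData V)
    (φ : V) (hφ : φ ∈ R.pos) (hlong : R.IsLong φ) (hne : φ ≠ R.θ) :
    ∃ i : Fin R.l,
      R.L (φ - RootSystemData.pair φ (R.simple i) • R.simple i) = R.L φ - 1 := by
  have hnorm : ‖φ‖ = ‖R.θ‖ := hlong
  have hφr := R.pos_subset hφ
  have hφ0 := R.root_ne_zero φ hφr
  have hφθ : ⟪φ, φ⟫ = ⟪R.θ, R.θ⟫ := by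
    rw [real_inner_self_eq_norm_sq, real_inner_self_eq_norm_sq, hnorm]
  obtain ⟨i, hi⟩ := R.exists_inner_simple_neg hφ
    (hφθ ▸ real_inner_lt_inner_self_of_norm_eq hnorm hne)
  have hαr := R.pos_subset (R.simple_mem_pos i)
  have hα_ne : R.simple i ≠ -φ := fun h => (R.pos_iff φ hφr).1 hφ (h ▸ R.simple_mem_pos i)
  have hpair : RootSystemData.pair (R.simple i) φ = -1 :=
    R.pair_eq_neg_one_of_inner_neg hαr hφr (hnorm ▸ R.θ_long _ hαr) hα_ne
      (by rwa [real_inner_comm])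
  have hinner : 2 * ⟪φ, R.simple i⟫ = -⟪R.θ, R.θ⟫ := by
    rw [real_inner_comm, ← RootSystemData.pair_mul_inner_self _ hφ0, hpair, hφθ, neg_one_mul]
  have hθθ : ⟪R.θ, R.θ⟫ ≠ 0 := hφθ ▸ inner_self_ne_zero.2 hφ0
  refine ⟨i, ?_⟩
  rw [R.L_sub_pair_smul_simple, hinner, neg_div, div_self hθθ, sub_eq_add_neg]
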